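/- Let L be a coherent lower prevision on all gambles on a nonempty set X and let 𝒯 be a monoid of transformations of X. Then L is strongly 𝒯-invariant (L(f − f∘T) ≥ 0 and L(f∘T − f) ≥ 0 for every gamble f and T ∈ 𝒯) if and only if every coherent prevision P ∈ 𝓜(L) satisfies P(1_{T⁻¹(A)}) = P(1_A) for every subset A ⊆ X and every T ∈ 𝒯, where 1_A denotes the indicator gamble of A. -/

import Mathlib

def IsGamble {X : Type*} (f : X → ℝ) : Prop :=
  BddAbove (Set.range f) ∧ BddBelow (Set.range f)

def IsCoherentLowerPrevision {X : Type*} (L : (X → ℝ) → ℝ) : Prop :=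
  (∀ f : X → ℝ, IsGamble f → sInf (Set.range f) ≤ L f) ∧
  (∀ f g : X → ℝ, IsGamble f → IsGamble g → L f + L g ≤ L (f + g)) ∧
  (∀ f : X → ℝ, IsGamble f → ∀ c : ℝ, 0 ≤ c → L (c • f) = c * L f)

def IsCoherentPrevision {X : Type*} (P : (X → ℝ) → ℝ) : Prop :=
  (∀ f g : X → ℝ, IsGamble f → IsGamble g → P (f + g) = P f + P g) ∧
  (∀ f : X → ℝ, IsGamble f → sInf (Set.range f) ≤ P f)

def IsTransformationMonoid {X : Type*} (𝒯 : Set (X → X)) : Prop :=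
  id ∈ 𝒯 ∧ ∀ S ∈ 𝒯, ∀ T ∈ 𝒯, S ∘ T ∈ 𝒯

def Dominating {X : Type*} (L : (X → ℝ) → ℝ) : Set ((X → ℝ) → ℝ) :=
  {P | IsCoherentPrevision P ∧ ∀ f : X → ℝ, IsGamble f → L f ≤ P f}

/-!
The forward direction is immediate from `L ≤ P` and additivity of `P`, applied to `1_A` and
`1_A ∘ T = 1_{T⁻¹ A}`.

Conversely, Hahn–Banach for the superlinear `L` on the space of gambles shows that every value
`L g` is attained as `Φ g` by a linear `Φ ≥ L`, and `Φ` (extended by zero) lies in `𝓜(L)`, so it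
is `T`-invariant on indicators. Since `Φ` is 1-Lipschitz for the sup norm and every gamble is a
uniform limit of finite combinations of indicators (`⌊n f⌋₊ / n` is a sum of level-set
indicators), `Φ` is `T`-invariant on all gambles. Hence `L (f - f ∘ T) = Φ f - Φ (f ∘ T) = 0` for
the `Φ` attaining it.
-/

open Set Finset

section

variable {X : Type*}

theorem isGamble_iff_exists_abs_le {f : X → ℝ} : IsGamble f ↔ ∃ C, ∀ x, |f x| ≤ C := by
  rw [IsGamble, and_comm, ← isBounded_iff_bddBelow_bddAbove, isBounded_iff_forall_norm_le]
  simp [Real.norm_eq_abs]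

theorem IsGamble.comp {f : X → ℝ} (hf : IsGamble f) (T : X → X) : IsGamble (f ∘ T) := by
  obtain ⟨C, hC⟩ := isGamble_iff_exists_abs_le.1 hf
  exact isGamble_iff_exists_abs_le.2 ⟨C, fun x => hC (T x)⟩

theorem isGamble_indicator_one (A : Set X) : IsGamble (A.indicator fun _ => 1) :=
  isGamble_iff_exists_abs_le.2 ⟨1, fun x => by by_cases hx : x ∈ A <;> simp [hx]⟩

theorem Nat.cast_floor_eq_sum_ite {t : ℝ} (ht : 0 ≤ t) {N : ℕ} (hN : ⌊t⌋₊ ≤ N) :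
    ∑ k ∈ range N, (if (k + 1 : ℝ) ≤ t then 1 else 0 : ℝ) = ⌊t⌋₊ := by
  rw [Finset.sum_boole]
  have : (range N).filter (fun k : ℕ => (k + 1 : ℝ) ≤ t) = range ⌊t⌋₊ := by
    ext k
    have := Nat.le_floor_iff (n := k + 1) ht
    push_cast at this
    rw [Finset.mem_filter, Finset.mem_range, Finset.mem_range, ← this]
    omega
  simp [this]

variable (X) in
def gambles : Submodule ℝ (X → ℝ) where
  carrier := {f | IsGamble f}
  add_mem' {f g} hf hg := by
    obtain ⟨C, hC⟩ := isGamble_iff_exists_abs_le.1 hf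
    obtain ⟨D, hD⟩ := isGamble_iff_exists_abs_le.1 hg
    exact isGamble_iff_exists_abs_le.2
      ⟨C + D, fun x => (abs_add_le _ _).trans (add_le_add (hC x) (hD x))⟩
  zero_mem' := isGamble_iff_exists_abs_le.2 ⟨0, by simp⟩
  smul_mem' c f hf := by
    obtain ⟨C, hC⟩ := isGamble_iff_exists_abs_le.1 hf
    refine isGamble_iff_exists_abs_le.2 ⟨|c| * C, fun x => ?_⟩
    rw [Pi.smul_apply, smul_eq_mul, abs_mul]
    exact mul_le_mul_of_nonneg_left (hC x) (abs_nonneg c)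

namespace gambles

instance : CoeFun (gambles X) fun _ => X → ℝ := ⟨fun f => f⟩

noncomputable def indicator (A : Set X) : gambles X :=
  ⟨A.indicator fun _ => 1, isGamble_indicator_one A⟩

def compRight (T : X → X) : gambles X →ₗ[ℝ] gambles X :=
  (LinearMap.funLeft ℝ ℝ T).restrict fun _ hf => IsGamble.comp hf T

theorem compRight_indicator (T : X → X) (A : Set X) :
    compRight T (indicator A) = indicator (T ⁻¹' A) := by
  ext x
  exact (Set.indicator_comp_right (g := fun _ => (1 : ℝ)) T).symm

theorem exists_mem_span_indicator_abs_sub_le (f : gambles X) {ε : ℝ} (hε : 0 < ε) :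
    ∃ s ∈ Submodule.span ℝ (range (indicator (X := X))), ∀ x, |f x - s x| ≤ ε := by
  obtain ⟨M, hM⟩ := isGamble_iff_exists_abs_le.1 f.2
  obtain ⟨n, hn⟩ := exists_nat_gt ε⁻¹
  have hn0 : (0 : ℝ) < n := (inv_pos.2 hε).trans hn
  -- the approximant is `⌊n (f + M)⌋₊ / n - M`, its floor counted by the layers below
  let layer (k : ℕ) : Set X := {x | (k + 1 : ℝ) ≤ n * (f x + M)}
  refine ⟨(n : ℝ)⁻¹ • ∑ k ∈ range ⌊2 * n * M⌋₊, indicator (layer k) - M • indicator univ,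
    ?_, fun x => ?_⟩
  · refine Submodule.sub_mem _ (Submodule.smul_mem _ _ (Submodule.sum_mem _ fun k _ => ?_))
      (Submodule.smul_mem _ _ ?_) <;> exact Submodule.subset_span ⟨_, rfl⟩
  set t := n * (f x + M)
  have ht : 0 ≤ t := mul_nonneg hn0.le (by linarith [(abs_le.1 (hM x)).1])
  have hN : ⌊t⌋₊ ≤ ⌊2 * n * M⌋₊ := Nat.floor_le_floor (by nlinarith [(abs_le.1 (hM x)).2])
  have hsx : f x - ((n : ℝ)⁻¹ • ∑ k ∈ range ⌊2 * n * M⌋₊, indicator (layer k) -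
      M • indicator univ : gambles X) x = (n : ℝ)⁻¹ * (t - ⌊t⌋₊) := by
    simp only [indicator, Submodule.coe_sub, Submodule.coe_smul, Submodule.coe_sum, Pi.sub_apply,
      Pi.smul_apply, Finset.sum_apply, Set.indicator_apply, layer, mem_ofPred_eq, mem_univ,
      if_true, smul_eq_mul, mul_one]
    rw [Nat.cast_floor_eq_sum_ite ht hN]
    field_simp
    ring
  rw [hsx, abs_of_nonneg (mul_nonneg (inv_nonneg.2 hn0.le) (sub_nonneg.2 (Nat.floor_le ht)))]
  calc (n : ℝ)⁻¹ * (t - ⌊t⌋₊) ≤ (n : ℝ)⁻¹ * 1 := by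
        gcongr; linarith [Nat.lt_floor_add_one t]
    _ ≤ ε := by rw [mul_one]; exact (inv_lt_of_inv_lt₀ hε hn).le

theorem abs_apply_le_of_sInf_le [Nonempty X] (Φ : gambles X →ₗ[ℝ] ℝ)
    (hΦ : ∀ g : gambles X, sInf (range g) ≤ Φ g) {g : gambles X} {ε : ℝ} (hg : ∀ x, |g x| ≤ ε) :
    |Φ g| ≤ ε := by
  have lower (h : gambles X) (hh : ∀ x, -ε ≤ h x) : -ε ≤ Φ h :=
    (le_csInf (range_nonempty _) (forall_mem_range.2 hh)).trans (hΦ h)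
  have h₁ := lower g fun x => (abs_le.1 (hg x)).1
  have h₂ := lower (-g) fun x => neg_le_neg (abs_le.1 (hg x)).2
  rw [map_neg] at h₂
  exact abs_le.2 ⟨h₁, by linarith⟩

theorem linearMap_ext_of_indicator {Φ Ψ : gambles X →ₗ[ℝ] ℝ}
    (hΦ : ∀ g : gambles X, ∀ ε, (∀ x, |g x| ≤ ε) → |Φ g| ≤ ε)
    (hΨ : ∀ g : gambles X, ∀ ε, (∀ x, |g x| ≤ ε) → |Ψ g| ≤ ε)
    (h : ∀ A, Φ (indicator A) = Ψ (indicator A)) : Φ = Ψ := by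
  ext f
  refine eq_of_forall_dist_le fun ε hε => ?_
  obtain ⟨s, hs, hfs⟩ := exists_mem_span_indicator_abs_sub_le f (half_pos hε)
  have hΦs : Φ s = Ψ s :=
    (Submodule.span_le (p := LinearMap.eqLocus Φ Ψ)).2 (range_subset_iff.2 h) hs
  calc dist (Φ f) (Ψ f) = |Φ (f - s) - Ψ (f - s)| := by
        rw [map_sub, map_sub, hΦs, Real.dist_eq, sub_sub_sub_cancel_right]
    _ ≤ |Φ (f - s)| + |Ψ (f - s)| := abs_sub _ _
    _ ≤ ε / 2 + ε / 2 := add_le_add (hΦ _ _ hfs) (hΨ _ _ hfs)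
    _ = ε := add_halves ε

theorem comp_compRight_eq_of_indicator [Nonempty X] (Φ : gambles X →ₗ[ℝ] ℝ)
    (hΦ : ∀ g : gambles X, sInf (range g) ≤ Φ g) (T : X → X)
    (h : ∀ A, Φ (indicator (T ⁻¹' A)) = Φ (indicator A)) : Φ ∘ₗ compRight T = Φ := by
  have hLip (g : gambles X) (ε : ℝ) (hg : ∀ x, |g x| ≤ ε) := abs_apply_le_of_sInf_le Φ hΦ hg
  refine linearMap_ext_of_indicator (fun g ε hg => hLip _ ε fun x => hg (T x)) hLip fun A => ?_
  rw [LinearMap.comp_apply, compRight_indicator, h]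

open Classical in
noncomputable def extend (Φ : gambles X →ₗ[ℝ] ℝ) (f : X → ℝ) : ℝ :=
  if hf : IsGamble f then Φ ⟨f, hf⟩ else 0

theorem extend_apply (Φ : gambles X →ₗ[ℝ] ℝ) {f : X → ℝ} (hf : IsGamble f) :
    extend Φ f = Φ ⟨f, hf⟩ :=
  dif_pos hf

end gambles

theorem IsCoherentPrevision.map_sub {P : (X → ℝ) → ℝ} (hP : IsCoherentPrevision P)
    {f g : X → ℝ} (hf : IsGamble f) (hg : IsGamble g) : P (f - g) = P f - P g := by
  have := hP.1 (f - g) g ((gambles X).sub_mem hf hg) hg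
  rw [sub_add_cancel] at this
  linarith

theorem apply_eq_of_mem_dominating {L P : (X → ℝ) → ℝ} (hP : P ∈ Dominating L) {f g : X → ℝ}
    (hf : IsGamble f) (hg : IsGamble g) (h₁ : 0 ≤ L (f - g)) (h₂ : 0 ≤ L (g - f)) : P f = P g := by
  have e₁ := (h₁.trans (hP.2 _ ((gambles X).sub_mem hf hg))).trans_eq (hP.1.map_sub hf hg)
  have e₂ := (h₂.trans (hP.2 _ ((gambles X).sub_mem hg hf))).trans_eq (hP.1.map_sub hg hf)
  linarith

namespace IsCoherentLowerPrevision

variable {L : (X → ℝ) → ℝ}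

theorem map_zero (hL : IsCoherentLowerPrevision L) : L 0 = 0 := by
  simpa using hL.2.2 0 (gambles X).zero_mem 0 le_rfl

theorem map_smul_le (hL : IsCoherentLowerPrevision L) {g : X → ℝ} (hg : IsGamble g) (c : ℝ) :
    L (c • g) ≤ c * L g := by
  rcases le_or_gt 0 c with hc | hc
  · exact (hL.2.2 g hg c hc).le
  · have := hL.2.1 (c • g) ((-c) • g) ((gambles X).smul_mem c hg) ((gambles X).smul_mem (-c) hg)
    rw [← add_smul, add_neg_cancel, zero_smul, hL.map_zero, hL.2.2 g hg (-c) (by linarith)] at this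
    linarith

theorem exists_linearMap_ge_eq (hL : IsCoherentLowerPrevision L) (g : gambles X) :
    ∃ Φ : gambles X →ₗ[ℝ] ℝ, (∀ u : gambles X, L u ≤ Φ u) ∧ Φ g = L g := by
  have H (c : ℝ) (hc : c • g = 0) : c • -L g = 0 := by
    rcases smul_eq_zero.1 hc with rfl | rfl
    · exact zero_smul ℝ _
    · simp [hL.map_zero]
  let Ψ₀ : gambles X →ₗ.[ℝ] ℝ := LinearPMap.mkSpanSingleton' g (-L g) H
  have hΨ₀ (x : Ψ₀.domain) : Ψ₀ x ≤ -L x := by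
    obtain ⟨_, hx⟩ := x
    obtain ⟨c, rfl⟩ := Submodule.mem_span_singleton.1 hx
    rw [LinearPMap.mkSpanSingleton'_apply]
    simpa using neg_le_neg (hL.map_smul_le g.2 c)
  obtain ⟨Ψ, hΨg, hΨL⟩ := exists_extension_of_le_sublinear Ψ₀ (fun u => -L u)
    (fun c hc u => by simp [hL.2.2 u u.2 c hc.le])
    (fun u v => by rw [Submodule.coe_add]; linarith [hL.2.1 u v u.2 v.2]) hΨ₀
  refine ⟨-Ψ, fun u => by linarith [hΨL u, LinearMap.neg_apply Ψ u], ?_⟩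
  have hg : Ψ g = -L g := (hΨg ⟨g, Submodule.mem_span_singleton_self g⟩).trans
    (LinearPMap.mkSpanSingleton'_apply_self _ _ _ _)
  rw [LinearMap.neg_apply, hg, neg_neg]

theorem extend_mem_dominating (hL : IsCoherentLowerPrevision L) {Φ : gambles X →ₗ[ℝ] ℝ}
    (hΦ : ∀ u : gambles X, L u ≤ Φ u) : gambles.extend Φ ∈ Dominating L := by
  refine ⟨⟨fun f g hf hg => ?_, fun f hf => ?_⟩, fun f hf => ?_⟩
  · rw [gambles.extend_apply Φ hf, gambles.extend_apply Φ hg,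
      gambles.extend_apply Φ ((gambles X).add_mem hf hg)]
    exact map_add Φ ⟨f, hf⟩ ⟨g, hg⟩
  · exact (hL.1 f hf).trans ((hΦ ⟨f, hf⟩).trans (gambles.extend_apply Φ hf).ge)
  · exact (hΦ ⟨f, hf⟩).trans (gambles.extend_apply Φ hf).ge

theorem comp_compRight_eq_of_forall_mem_dominating [Nonempty X] (hL : IsCoherentLowerPrevision L)
    {T : X → X} (hT : ∀ P ∈ Dominating L, ∀ A : Set X,
      P ((T ⁻¹' A).indicator fun _ => 1) = P (A.indicator fun _ => 1))
    {Φ : gambles X →ₗ[ℝ] ℝ} (hΦ : ∀ u : gambles X, L u ≤ Φ u) : Φ ∘ₗ gambles.compRight T = Φ := by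
  refine gambles.comp_compRight_eq_of_indicator Φ (fun u => (hL.1 u u.2).trans (hΦ u)) T
    fun A => ?_
  have := hT _ (hL.extend_mem_dominating hΦ) A
  rwa [gambles.extend_apply Φ (isGamble_indicator_one _),
    gambles.extend_apply Φ (isGamble_indicator_one _)] at this

end IsCoherentLowerPrevision

end

theorem stmt13_general (X : Type*) [Nonempty X] (𝒯 : Set (X → X))
    (L : (X → ℝ) → ℝ) (hL : IsCoherentLowerPrevision L) :
    (∀ f : X → ℝ, IsGamble f → ∀ T ∈ 𝒯,
        0 ≤ L (f - f ∘ T) ∧ 0 ≤ L (f ∘ T - f)) ↔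
    (∀ P ∈ Dominating L, ∀ A : Set X, ∀ T ∈ 𝒯,
        P (Set.indicator (T ⁻¹' A) (fun _ => (1 : ℝ))) =
          P (Set.indicator A (fun _ => (1 : ℝ)))) := by
  constructor
  · intro hinv P hP A T hT
    have hA := isGamble_indicator_one A
    have hcomp : (A.indicator fun _ => (1 : ℝ)) ∘ T = (T ⁻¹' A).indicator fun _ => 1 :=
      funext fun _ => (Set.indicator_comp_right T).symm
    obtain ⟨h₁, h₂⟩ := hinv _ hA T hT
    rw [← hcomp]
    exact apply_eq_of_mem_dominating hP (hA.comp T) hA h₂ h₁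
  · intro hP f hf T hT
    let u : gambles X := ⟨f, hf⟩
    have hinv (Φ : gambles X →ₗ[ℝ] ℝ) (hΦ : ∀ v : gambles X, L v ≤ Φ v) :
        Φ (gambles.compRight T u) = Φ u :=
      LinearMap.congr_fun (hL.comp_compRight_eq_of_forall_mem_dominating (hP · · · T hT) hΦ) u
    have hnonneg (v : gambles X)
        (hv : ∀ Φ : gambles X →ₗ[ℝ] ℝ, (∀ w : gambles X, L w ≤ Φ w) → Φ v = 0) : 0 ≤ L v := by
      obtain ⟨Φ, hΦ, hΦv⟩ := hL.exists_linearMap_ge_eq v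
      rw [← hΦv, hv Φ hΦ]
    exact ⟨hnonneg (u - gambles.compRight T u) fun Φ hΦ => by rw [map_sub, hinv Φ hΦ, sub_self],
      hnonneg (gambles.compRight T u - u) fun Φ hΦ => by rw [map_sub, hinv Φ hΦ, sub_self]⟩

theorem stmt13 (X : Type*) [Nonempty X] (𝒯 : Set (X → X))
    (h𝒯 : IsTransformationMonoid 𝒯)
    (L : (X → ℝ) → ℝ) (hL : IsCoherentLowerPrevision L) :
    (∀ f : X → ℝ, IsGamble f → ∀ T ∈ 𝒯,
        0 ≤ L (f - f ∘ T) ∧ 0 ≤ L (f ∘ T - f)) ↔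
    (∀ P ∈ Dominating L, ∀ A : Set X, ∀ T ∈ 𝒯,
        P (Set.indicator (T ⁻¹' A) (fun _ => (1 : ℝ))) =
          P (Set.indicator A (fun _ => (1 : ℝ)))) :=
  stmt13_general X 𝒯 L hL
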